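/- Let n ≥ 2 and let Ψ₁(x) = ( x*/(|x|² − x_{n+1}) , |x|√(1 − |x|²)/||x|² − x_{n+1}| ) ∈ ℝ^n × ℝ, where x* = (x₁, …, x_n), defined for x ∈ ℝ^{n+1} with 0 < |x| < 1 and |x|² ≠ x_{n+1}. Then at every such x the map Ψ₁ (viewed as a map from an open subset of ℝ^{n+1} to ℝ^{n+1}) is differentiable and the absolute value of its Jacobian determinant equals |x| / ( ||x|² − x_{n+1}|^{n+1} · √(1 − |x|²) ); in particular the Jacobian determinant never vanishes on the domain of Ψ₁. -/

import Mathlib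

/-- The map `Ψ₁(x) = (x*/(|x|² − x_{n+1}), |x|√(1 − |x|²)/||x|² − x_{n+1}|)`, viewed as a map
from (an open subset of) `ℝ^{n+1}` to `ℝ^{n+1}`, with the radius stored in the last
coordinate. -/
noncomputable def Psi1 (n : ℕ) (x : EuclideanSpace ℝ (Fin (n + 1))) :
    EuclideanSpace ℝ (Fin (n + 1)) :=
  WithLp.toLp 2 fun i =>
    Fin.lastCases (‖x‖ * Real.sqrt (1 - ‖x‖ ^ 2) / |‖x‖ ^ 2 - x (Fin.last n)|)
      (fun j : Fin n => x j.castSucc / (‖x‖ ^ 2 - x (Fin.last n))) i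

/-!
`Ψ₁ = θ ∘ φ` with `φ(x) = x / (|x|² − x_{n+1})` and `θ(y)` obtained from `y` by replacing its
last coordinate with `√(|y|² − (1 + y_{n+1})²)`. Both differentials are rank-one perturbations
of multiples of the identity, so the matrix determinant lemma gives
`det dφ(x) = −|x|² / (|x|² − x_{n+1})^{n+2}` and `det dθ(y) = −1 / √(|y|² − (1 + y_{n+1})²)`,
and at `y = φ(x)` that square root is `|x| √(1 − |x|²) / ||x|² − x_{n+1}|`.
-/

open Module
open scoped RealInnerProductSpace

theorem LinearMap.det_id_add_smulRight {R M : Type*} [CommRing R] [AddCommGroup M] [Module R M]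
    [Module.Free R M] [Module.Finite R M] (f : M →ₗ[R] R) (v : M) :
    LinearMap.det (LinearMap.id + f.smulRight v) = 1 + f v := by
  let b := Module.Free.chooseBasis R M
  rw [← LinearMap.det_toMatrix b, map_add, LinearMap.toMatrix_id, LinearMap.toMatrix_smulRight,
    Matrix.vecMulVec_eq Unit, Matrix.det_one_add_replicateCol_mul_replicateRow]
  conv_rhs => rw [← b.sum_repr v, map_sum]
  simp only [dotProduct, Function.comp_apply, map_smul, smul_eq_mul, mul_comm]

theorem LinearMap.det_smul_id_add_smulRight {K M : Type*} [Field K] [AddCommGroup M] [Module K M]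
    [FiniteDimensional K M] {a : K} (ha : a ≠ 0) (f : M →ₗ[K] K) (v : M) :
    LinearMap.det (a • LinearMap.id + f.smulRight v) = a ^ finrank K M * (1 + a⁻¹ * f v) := by
  have : a • LinearMap.id + f.smulRight v = a • (LinearMap.id + (a⁻¹ • f).smulRight v) := by
    ext w
    simp [smul_smul, ha]
  rw [this, LinearMap.det_smul, LinearMap.det_id_add_smulRight]
  rfl

theorem ContinuousLinearMap.det_comp {R M : Type*} [CommRing R] [AddCommGroup M]
    [TopologicalSpace M] [Module R M] (g f : M →L[R] M) : (g.comp f).det = g.det * f.det :=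
  LinearMap.det_comp (g : M →ₗ[R] M) f

namespace ContinuousLinearMap

variable {K M : Type*} [Field K] [TopologicalSpace K] [AddCommGroup M] [TopologicalSpace M]
  [IsTopologicalAddGroup M] [Module K M] [ContinuousSMul K M] [FiniteDimensional K M]

theorem det_id_add_smulRight (f : M →L[K] K) (v : M) :
    (ContinuousLinearMap.id K M + f.smulRight v).det = 1 + f v :=
  LinearMap.det_id_add_smulRight (f : M →ₗ[K] K) v

theorem det_smul_id_add_smulRight {a : K} (ha : a ≠ 0) (f : M →L[K] K) (v : M) :
    (a • ContinuousLinearMap.id K M + f.smulRight v).det = a ^ finrank K M * (1 + a⁻¹ * f v) :=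
  LinearMap.det_smul_id_add_smulRight ha (f : M →ₗ[K] K) v

end ContinuousLinearMap

namespace Psi1

variable {E : Type*} [NormedAddCommGroup E] [InnerProductSpace ℝ E]

/-- The power of `x` with respect to the sphere with diameter `[0, e]`. -/
noncomputable def spherePower (e x : E) : ℝ := ‖x‖ ^ 2 - ⟪e, x⟫

noncomputable def rescale (e x : E) : E := (spherePower e x)⁻¹ • x

noncomputable def radiusSq (e y : E) : ℝ := ‖y‖ ^ 2 - (1 + ⟪e, y⟫) ^ 2

noncomputable def withRadius (e y : E) : E := y + (√(radiusSq e y) - ⟪e, y⟫) • e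

variable {e : E}

theorem hasFDerivAt_spherePower (e x : E) :
    HasFDerivAt (spherePower e) (2 • innerSL ℝ x - innerSL ℝ e) x :=
  (hasStrictFDerivAt_norm_sq x).hasFDerivAt.sub (innerSL ℝ e).hasFDerivAt

theorem hasFDerivAt_rescale {x : E} (hx : spherePower e x ≠ 0) :
    HasFDerivAt (rescale e)
      ((spherePower e x)⁻¹ • ContinuousLinearMap.id ℝ E +
        (-(spherePower e x ^ 2)⁻¹ • (2 • innerSL ℝ x - innerSL ℝ e)).smulRight x) x :=
  ((hasDerivAt_inv hx).comp_hasFDerivAt x (hasFDerivAt_spherePower e x)).smul (hasFDerivAt_id x)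

theorem hasFDerivAt_radiusSq (e y : E) :
    HasFDerivAt (radiusSq e) (2 • innerSL ℝ y - (2 * (1 + ⟪e, y⟫)) • innerSL ℝ e) y := by
  have h := ((innerSL ℝ e).hasFDerivAt (x := y)).const_add 1 |>.pow 2
  refine ((hasStrictFDerivAt_norm_sq y).hasFDerivAt.sub h).congr_fderiv ?_
  congr 1
  simp only [innerSL_apply_apply, nsmul_eq_mul]
  norm_num

theorem hasFDerivAt_withRadius {y : E} (hy : radiusSq e y ≠ 0) :
    HasFDerivAt (withRadius e)
      (ContinuousLinearMap.id ℝ E + ((1 / (2 * √(radiusSq e y))) •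
        (2 • innerSL ℝ y - (2 * (1 + ⟪e, y⟫)) • innerSL ℝ e) - innerSL ℝ e).smulRight e) y :=
  (hasFDerivAt_id y).add
    ((((hasFDerivAt_radiusSq e y).sqrt hy).sub (innerSL ℝ e).hasFDerivAt).smul_const e)

theorem det_fderiv_rescale [FiniteDimensional ℝ E] {x : E} (hx : spherePower e x ≠ 0) :
    (fderiv ℝ (rescale e) x).det = -‖x‖ ^ 2 / spherePower e x ^ (finrank ℝ E + 1) := by
  rw [(hasFDerivAt_rescale hx).fderiv,
    ContinuousLinearMap.det_smul_id_add_smulRight (inv_ne_zero hx)]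
  simp only [smul_apply, sub_apply, innerSL_apply_apply, real_inner_self_eq_norm_sq, smul_eq_mul,
    nsmul_eq_mul, inv_pow]
  unfold spherePower at hx ⊢
  field_simp
  ring

theorem det_fderiv_withRadius [FiniteDimensional ℝ E] (he : ‖e‖ = 1) {y : E}
    (hy : 0 < radiusSq e y) :
    (fderiv ℝ (withRadius e) y).det = -(√(radiusSq e y))⁻¹ := by
  have hs : 0 < √(radiusSq e y) := Real.sqrt_pos.2 hy
  rw [(hasFDerivAt_withRadius hy.ne').fderiv, ContinuousLinearMap.det_id_add_smulRight]
  simp only [smul_apply, sub_apply, innerSL_apply_apply, real_inner_self_eq_norm_sq,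
    real_inner_comm y e, he, smul_eq_mul, nsmul_eq_mul]
  field_simp
  ring

theorem radiusSq_rescale {x : E} (hx : spherePower e x ≠ 0) :
    radiusSq e (rescale e x) = ‖x‖ ^ 2 * (1 - ‖x‖ ^ 2) / spherePower e x ^ 2 := by
  have h1 : 1 + ⟪e, rescale e x⟫ = ‖x‖ ^ 2 / spherePower e x := by
    rw [rescale, inner_smul_right]
    unfold spherePower at hx ⊢
    field_simp
    ring
  rw [radiusSq, h1, rescale, norm_smul, mul_pow, norm_inv, Real.norm_eq_abs, inv_pow, sq_abs]
  field_simp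

theorem sqrt_radiusSq_rescale (e x : E) :
    √(radiusSq e (rescale e x)) = ‖x‖ * √(1 - ‖x‖ ^ 2) / |spherePower e x| := by
  by_cases hx : spherePower e x = 0
  · simp [rescale, hx, radiusSq, Real.sqrt_eq_zero']
  rw [radiusSq_rescale hx, Real.sqrt_div' _ (sq_nonneg _), Real.sqrt_sq_eq_abs,
    Real.sqrt_mul (sq_nonneg _), Real.sqrt_sq (norm_nonneg x)]

theorem spherePower_single_last {n : ℕ} (x : EuclideanSpace ℝ (Fin (n + 1))) :
    spherePower (EuclideanSpace.single (Fin.last n) 1) x = ‖x‖ ^ 2 - x (Fin.last n) := by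
  simp [spherePower, EuclideanSpace.inner_single_left]

theorem eq_withRadius_comp_rescale (n : ℕ) :
    Psi1 n = withRadius (EuclideanSpace.single (Fin.last n) 1) ∘
      rescale (EuclideanSpace.single (Fin.last n) 1) := by
  funext z
  ext i
  induction i using Fin.lastCases with
  | last =>
    simp [Psi1, withRadius, EuclideanSpace.inner_single_left, sqrt_radiusSq_rescale,
      spherePower_single_last]
  | cast j =>
    simp [Psi1, withRadius, rescale, spherePower_single_last, div_eq_inv_mul,
      (Fin.castSucc_lt_last j).ne]

end Psi1

open Psi1

theorem stmt10_general (n : ℕ) (x : EuclideanSpace ℝ (Fin (n + 1)))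
    (hx0 : 0 < ‖x‖) (hx1 : ‖x‖ < 1) (hxS : ‖x‖ ^ 2 ≠ x (Fin.last n)) :
    DifferentiableAt ℝ (Psi1 n) x ∧
    |(fderiv ℝ (Psi1 n) x).det| =
      ‖x‖ / (|‖x‖ ^ 2 - x (Fin.last n)| ^ (n + 1) * Real.sqrt (1 - ‖x‖ ^ 2)) ∧
    (fderiv ℝ (Psi1 n) x).det ≠ 0 := by
  set e := EuclideanSpace.single (Fin.last n) (1 : ℝ)
  have hD : spherePower e x ≠ 0 := by rwa [spherePower_single_last, sub_ne_zero]
  have hs : 0 < √(1 - ‖x‖ ^ 2) := Real.sqrt_pos.2 (by nlinarith)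
  have hr : 0 < radiusSq e (rescale e x) := by
    rw [← Real.sqrt_pos, sqrt_radiusSq_rescale]
    exact div_pos (mul_pos hx0 hs) (abs_pos.2 hD)
  have hφ := (hasFDerivAt_rescale hD).differentiableAt
  have hθ := (hasFDerivAt_withRadius hr.ne').differentiableAt
  have hdet : (fderiv ℝ (Psi1 n) x).det =
      -(‖x‖ * √(1 - ‖x‖ ^ 2) / |spherePower e x|)⁻¹ *
        (-‖x‖ ^ 2 / spherePower e x ^ (n + 2)) := by
    rw [eq_withRadius_comp_rescale, fderiv_comp x hθ hφ, ContinuousLinearMap.det_comp,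
      det_fderiv_withRadius (by simp [e]) hr, det_fderiv_rescale hD, finrank_euclideanSpace_fin,
      sqrt_radiusSq_rescale]
  rw [spherePower_single_last] at hD hdet
  refine ⟨eq_withRadius_comp_rescale n ▸ hθ.comp x hφ, ?_, by simp [hdet, hD, hx0.ne', hs.ne']⟩
  rw [hdet, abs_mul, abs_neg, abs_inv, abs_div, abs_div, abs_neg, abs_pow, abs_pow, abs_abs,
    abs_mul, abs_norm, abs_of_pos hs]
  field_simp
  ring

/-- On its domain `{0 < |x| < 1, |x|² ≠ x_{n+1}}`, `Ψ₁` is differentiable with Jacobian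
determinant of absolute value `|x| / (||x|² − x_{n+1}|^{n+1} √(1 − |x|²))`; in particular the
Jacobian never vanishes. -/
theorem stmt10 (n : ℕ) (hn : 2 ≤ n) (x : EuclideanSpace ℝ (Fin (n + 1)))
    (hx0 : 0 < ‖x‖) (hx1 : ‖x‖ < 1) (hxS : ‖x‖ ^ 2 ≠ x (Fin.last n)) :
    DifferentiableAt ℝ (Psi1 n) x ∧
    |(fderiv ℝ (Psi1 n) x).det| =
      ‖x‖ / (|‖x‖ ^ 2 - x (Fin.last n)| ^ (n + 1) * Real.sqrt (1 - ‖x‖ ^ 2)) ∧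
    (fderiv ℝ (Psi1 n) x).det ≠ 0 :=
  stmt10_general n x hx0 hx1 hxS
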